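/- Let a ≥ c ≥ 0 be integers and 0 ≤ r ≤ c. Define z(x,y,w) = −x(x−1)/2 − y(y−1) − w(w−1)/2 for integers x, y, w, set X_0 = q^{−a(a−1)/2 − c(c−1)/2 + c} ∈ ℚ(q), and for r ≥ 1 set X_r = q^{rc−(3r²+r)/2} · ((1+(−q²))(1+(−q²)²)⋯(1+(−q²)^r)) / ((1−q²)^r {a}{a−1}⋯{a−r+1}) · X_0. Then there is a sign σ ∈ {1, −1} such that σ q^{−d_r} X_r ∈ 1 + q A₀, where d_r = z(a−r, r, c−r) + (c−r); in particular X_r ∈ q^{d_r} A₀ and X_r ∉ q^{d_r+1} A₀. -/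

import Mathlib

/-!
Each factor of `X_r` is a power of `q` times a principal unit of `A₀`, i.e. a quotient of
polynomials with constant term `1`: this is clear for the products over `1 + (−q²)^k` and
`(1 − q²)^r`, and `{s} = q^{1−s} (1 − (−q²)^s) / (1 + q²)`. Principal units form a group, so
`X_r = q^d u` with `u` a principal unit, and `d` is the sum of the exponents, which is
`d_r`. Then `σ = 1` works, and `u(0) = 1 ≠ 0` rules out `X_r ∈ q^{d+1} A₀`.
-/
namespace OSP

/-- The base field `ℚ(q)`. -/
abbrev K : Type := RatFunc ℚ

/-- The indeterminate `q`. -/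
noncomputable def q : K := RatFunc.X

/-- `{s} = ((−q)^s − q^{−s})/(−q − q^{−1})` (and more generally in base `z`). -/
noncomputable def qb (z : K) (s : ℕ) : K := ((-z) ^ s - z⁻¹ ^ s) / (-z - z⁻¹)

/-- `A₀ ⊆ ℚ(q)`: the subring of rational functions regular at `q = 0`. -/
def A0 : Set K :=
  {f | ∃ p r : Polynomial ℚ, r.coeff 0 ≠ 0 ∧
    f = algebraMap (Polynomial ℚ) K p / algebraMap (Polynomial ℚ) K r}

/-- `z(x,y,w) = −x(x−1)/2 − y(y−1) − w(w−1)/2`. -/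
def zf (x y w : ℤ) : ℤ := -(x * (x - 1)) / 2 - y * (y - 1) - w * (w - 1) / 2

/-- The element `X_r` of Appendix A.2:
`X_0 = q^{−a(a−1)/2 − c(c−1)/2 + c}` and
`X_r = q^{rc−(3r²+r)/2} ((1+(−q²))⋯(1+(−q²)^r))/((1−q²)^r {a}{a−1}⋯{a−r+1}) X_0`. -/
noncomputable def X19 (a c : ℕ) (r : ℕ) : K :=
  q ^ ((r : ℤ) * c - (3 * (r : ℤ) ^ 2 + r) / 2) *
      (∏ t ∈ Finset.range r, (1 + (-(q ^ 2)) ^ (t + 1))) /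
      ((1 - q ^ 2) ^ r * ∏ t ∈ Finset.range r, qb q (a - t)) *
    q ^ (-((a : ℤ) * ((a : ℤ) - 1)) / 2 - (c : ℤ) * ((c : ℤ) - 1) / 2 + c)

open Polynomial

lemma q_ne_zero : q ≠ 0 := RatFunc.X_ne_zero

lemma algebraMap_eq_aeval_q (p : ℚ[X]) : algebraMap ℚ[X] K p = aeval q p := by
  rw [q, ← RatFunc.algebraMap_X, aeval_algebraMap_apply, aeval_X_left_apply]

/-- The principal units of the local ring `A₀`; they are exactly the elements of `1 + qA₀`. -/
def principalUnits : Submonoid K where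
  carrier := {u | ∃ N D : ℚ[X], N.coeff 0 = 1 ∧ D.coeff 0 = 1 ∧
    u = algebraMap ℚ[X] K N / algebraMap ℚ[X] K D}
  one_mem' := ⟨1, 1, by simp, by simp, by simp⟩
  mul_mem' := by
    rintro _ _ ⟨N₁, D₁, hN₁, hD₁, rfl⟩ ⟨N₂, D₂, hN₂, hD₂, rfl⟩
    refine ⟨N₁ * N₂, D₁ * D₂, by simp [mul_coeff_zero, hN₁, hN₂],
      by simp [mul_coeff_zero, hD₁, hD₂], ?_⟩
    rw [map_mul, map_mul, div_mul_div_comm]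

namespace principalUnits

variable {u v : K}

lemma inv_mem (hu : u ∈ principalUnits) : u⁻¹ ∈ principalUnits := by
  obtain ⟨N, D, hN, hD, rfl⟩ := hu
  exact ⟨D, N, hD, hN, inv_div _ _⟩

lemma div_mem (hu : u ∈ principalUnits) (hv : v ∈ principalUnits) :
    u / v ∈ principalUnits :=
  div_eq_mul_inv u v ▸ mul_mem hu (inv_mem hv)

lemma mem_of_aeval_q_eq {p : ℚ[X]} (hp : p.coeff 0 = 1) (hu : aeval q p = u) :
    u ∈ principalUnits :=
  ⟨p, 1, hp, by simp, by simp [← hu, algebraMap_eq_aeval_q]⟩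

lemma mem_A0 (hu : u ∈ principalUnits) : u ∈ A0 :=
  let ⟨N, D, _, hD, h⟩ := hu
  ⟨N, D, hD ▸ one_ne_zero, h⟩

lemma exists_mem_A0_eq_one_add_q_mul (hu : u ∈ principalUnits) :
    ∃ f ∈ A0, u = 1 + q * f := by
  obtain ⟨N, D, hN, hD, rfl⟩ := hu
  have hD0 : algebraMap ℚ[X] K D ≠ 0 := RatFunc.algebraMap_ne_zero fun h => by simp [h] at hD
  -- `N - D` has no constant term, so it is `X * (N - D).divX`.
  have hND : X * (N - D).divX = N - D := by
    simpa [hN, hD] using X_mul_divX_add (N - D)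
  refine ⟨algebraMap ℚ[X] K (N - D).divX / algebraMap ℚ[X] K D, ⟨_, D, by simp [hD], rfl⟩, ?_⟩
  rw [q, ← RatFunc.algebraMap_X, mul_div_assoc', ← map_mul, hND, map_sub]
  field_simp
  ring

lemma not_exists_mem_A0_eq_q_mul (hu : u ∈ principalUnits) :
    ¬∃ f ∈ A0, u = q * f := by
  obtain ⟨N, D, hN, hD, rfl⟩ := hu
  rintro ⟨_, ⟨p, ρ, hρ, rfl⟩, h⟩
  have hD0 : algebraMap ℚ[X] K D ≠ 0 := RatFunc.algebraMap_ne_zero fun h => by simp [h] at hD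
  have hρ0 : algebraMap ℚ[X] K ρ ≠ 0 := RatFunc.algebraMap_ne_zero fun h => by simp [h] at hρ
  have hpoly : N * ρ = X * p * D := by
    apply RatFunc.algebraMap_injective ℚ
    rw [q, ← RatFunc.algebraMap_X] at h
    field_simp at h
    simp only [map_mul]
    linear_combination h
  exact hρ (by simpa [mul_coeff_zero, hN] using congrArg (coeff · 0) hpoly)

lemma ne_zero (hu : u ∈ principalUnits) : u ≠ 0 := fun h =>
  not_exists_mem_A0_eq_q_mul hu ⟨0, ⟨0, 1, by simp, by simp⟩, by simp [h]⟩

end principalUnits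

def IsQPowMulPrincipalUnit (d : ℤ) (f : K) : Prop :=
  ∃ u ∈ principalUnits, f = q ^ d * u

namespace IsQPowMulPrincipalUnit

variable {d e : ℤ} {f g : K}

lemma zpow (d : ℤ) : IsQPowMulPrincipalUnit d (q ^ d) :=
  ⟨1, one_mem _, (mul_one _).symm⟩

lemma of_mem (hf : f ∈ principalUnits) : IsQPowMulPrincipalUnit 0 f :=
  ⟨f, hf, by simp⟩

lemma mul (hf : IsQPowMulPrincipalUnit d f) (hg : IsQPowMulPrincipalUnit e g) :
    IsQPowMulPrincipalUnit (d + e) (f * g) := by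
  obtain ⟨u, hu, rfl⟩ := hf
  obtain ⟨v, hv, rfl⟩ := hg
  exact ⟨u * v, mul_mem hu hv, by rw [zpow_add₀ q_ne_zero]; ring⟩

lemma div (hf : IsQPowMulPrincipalUnit d f) (hg : IsQPowMulPrincipalUnit e g) :
    IsQPowMulPrincipalUnit (d - e) (f / g) := by
  obtain ⟨u, hu, rfl⟩ := hf
  obtain ⟨v, hv, rfl⟩ := hg
  exact ⟨u / v, principalUnits.div_mem hu hv, by rw [zpow_sub₀ q_ne_zero]; ring⟩

lemma prod {n : ℕ} {e : ℕ → ℤ} {f : ℕ → K} (h : ∀ t < n, IsQPowMulPrincipalUnit (e t) (f t)) :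
    IsQPowMulPrincipalUnit (∑ t ∈ Finset.range n, e t) (∏ t ∈ Finset.range n, f t) := by
  induction n with
  | zero => simpa using zpow 0
  | succ n ih =>
    rw [Finset.sum_range_succ, Finset.prod_range_succ]
    exact (ih fun t ht => h t (by omega)).mul (h n n.lt_succ_self)

end IsQPowMulPrincipalUnit

lemma one_add_q_sq_mem : (1 : K) + q ^ 2 ∈ principalUnits :=
  principalUnits.mem_of_aeval_q_eq (p := 1 + X ^ 2) (by simp) (by simp)

lemma qb_q_eq (s : ℕ) :
    qb q s = q ^ (1 - (s : ℤ)) * (1 - (-q ^ 2) ^ s) / (1 + q ^ 2) := by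
  have hq := q_ne_zero
  have h1q2 := principalUnits.ne_zero one_add_q_sq_mem
  have hden : -q - q⁻¹ = -(1 + q ^ 2) / q := by field_simp; ring
  rw [qb, hden, zpow_sub₀ hq, zpow_one, zpow_natCast, inv_pow, neg_pow q, neg_pow (q ^ 2),
    ← pow_mul, pow_mul']
  field_simp
  ring

lemma isQPowMulPrincipalUnit_qb {s : ℕ} (hs : s ≠ 0) :
    IsQPowMulPrincipalUnit (1 - s) (qb q s) := by
  have hnum : (1 : K) - (-q ^ 2) ^ s ∈ principalUnits :=
    principalUnits.mem_of_aeval_q_eq (p := 1 - (-X ^ 2) ^ s)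
      (by simp [coeff_zero_eq_eval_zero, zero_pow hs]) (by simp)
  rw [qb_q_eq]
  simpa using ((IsQPowMulPrincipalUnit.zpow _).mul (.of_mem hnum)).div (.of_mem one_add_q_sq_mem)

lemma two_mul_sum_range_intCast (n : ℕ) : 2 * ∑ t ∈ Finset.range n, (t : ℤ) = n * (n - 1) := by
  induction n with
  | zero => simp
  | succ n ih =>
    rw [Finset.sum_range_succ, mul_add, ih]
    push_cast
    ring

lemma X19_exponent_eq (a c r : ℕ) :
    ((r : ℤ) * c - (3 * (r : ℤ) ^ 2 + r) / 2) - ∑ t ∈ Finset.range r, (1 - ((a : ℤ) - t)) +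
        (-((a : ℤ) * ((a : ℤ) - 1)) / 2 - (c : ℤ) * ((c : ℤ) - 1) / 2 + c) =
      zf ((a : ℤ) - r) r ((c : ℤ) - r) + ((c : ℤ) - r) := by
  have hsum : ∑ t ∈ Finset.range r, (1 - ((a : ℤ) - t)) =
      r * (1 - a) + ∑ t ∈ Finset.range r, (t : ℤ) := by
    simp only [sub_sub_eq_add_sub, Finset.sum_add_distrib, Finset.sum_sub_distrib,
      Finset.sum_const, Finset.card_range, nsmul_eq_mul]
    ring
  have half (x : ℤ) : 2 * (x * (x - 1) / 2) = x * (x - 1) :=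
    Int.two_mul_ediv_two_of_even (Int.even_mul_pred_self x)
  have half_neg (x : ℤ) : 2 * (-(x * (x - 1)) / 2) = -(x * (x - 1)) :=
    Int.two_mul_ediv_two_of_even (Int.even_mul_pred_self x).neg
  have h3 : 2 * ((3 * (r : ℤ) ^ 2 + r) / 2) = 3 * (r : ℤ) ^ 2 + r :=
    Int.two_mul_ediv_two_of_even (by
      rw [show 3 * (r : ℤ) ^ 2 + r = r * (r - 1) + 2 * (r ^ 2 + r) by ring]
      exact (Int.even_mul_pred_self r).add (even_two_mul _))
  rw [hsum, zf]
  refine mul_left_cancel₀ (two_ne_zero (α := ℤ)) ?_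
  linear_combination -h3 + half_neg a - half c - two_mul_sum_range_intCast r - half_neg (a - r) +
    half (c - r)

lemma isQPowMulPrincipalUnit_X19 (a c r : ℕ) (hra : r ≤ a) :
    IsQPowMulPrincipalUnit (zf ((a : ℤ) - r) r ((c : ℤ) - r) + ((c : ℤ) - r)) (X19 a c r) := by
  have hnum : ∏ t ∈ Finset.range r, (1 + (-(q ^ 2)) ^ (t + 1)) ∈ principalUnits :=
    prod_mem fun t _ =>
      principalUnits.mem_of_aeval_q_eq (p := 1 + (-X ^ 2) ^ (t + 1))
        (by simp [coeff_zero_eq_eval_zero]) (by simp)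
  have hpow : (1 - q ^ 2) ^ r ∈ principalUnits :=
    pow_mem (principalUnits.mem_of_aeval_q_eq (p := 1 - X ^ 2) (by simp) (by simp)) r
  have hqb : IsQPowMulPrincipalUnit (∑ t ∈ Finset.range r, (1 - ((a : ℤ) - t)))
      (∏ t ∈ Finset.range r, qb q (a - t)) :=
    .prod fun t ht => by
      simpa [Nat.cast_sub (by omega : t ≤ a)] using
        isQPowMulPrincipalUnit_qb (s := a - t) (by omega)
  rw [← X19_exponent_eq, X19]
  convert (((IsQPowMulPrincipalUnit.zpow _).mul (.of_mem hnum)).div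
    ((IsQPowMulPrincipalUnit.of_mem hpow).mul hqb)).mul (.zpow _) using 2
  ring

/-- With `d_r = z(a−r, r, c−r) + (c−r)`, there is a sign
`σ ∈ {1,−1}` with `σ q^{−d_r} X_r ∈ 1 + qA₀`; in particular `X_r ∈ q^{d_r}A₀` and
`X_r ∉ q^{d_r+1}A₀`. -/
theorem statement19 (a c r : ℕ) (hca : c ≤ a) (hrc : r ≤ c) :
    ∃ σ : K, (σ = 1 ∨ σ = -1) ∧
      (∃ f ∈ A0,
        σ * q ^ (-(zf ((a : ℤ) - r) r ((c : ℤ) - r) + ((c : ℤ) - r))) * X19 a c r =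
          1 + q * f) ∧
      (∃ f ∈ A0,
        X19 a c r = q ^ (zf ((a : ℤ) - r) r ((c : ℤ) - r) + ((c : ℤ) - r)) * f) ∧
      ¬∃ f ∈ A0,
        X19 a c r = q ^ (zf ((a : ℤ) - r) r ((c : ℤ) - r) + ((c : ℤ) - r) + 1) * f := by
  obtain ⟨u, hu, hX⟩ := isQPowMulPrincipalUnit_X19 a c r (hrc.trans hca)
  set d := zf ((a : ℤ) - r) r ((c : ℤ) - r) + ((c : ℤ) - r)
  have hqd : q ^ d ≠ 0 := zpow_ne_zero d q_ne_zero
  refine ⟨1, Or.inl rfl, ?_, ⟨u, principalUnits.mem_A0 hu, hX⟩, ?_⟩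
  · rw [one_mul, hX, zpow_neg, inv_mul_cancel_left₀ hqd]
    exact principalUnits.exists_mem_A0_eq_one_add_q_mul hu
  · rintro ⟨f, hf, hXf⟩
    refine principalUnits.not_exists_mem_A0_eq_q_mul hu ⟨f, hf, mul_left_cancel₀ hqd ?_⟩
    rw [← hX, hXf, zpow_add_one₀ q_ne_zero, mul_assoc]

end OSP
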